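/- arXiv:math/0201188 — 7 statements merged into one kernel-verified Lean document; each statement's English description precedes it below -/
import Mathlib

section
/- Let M be a von Neumann algebra of type I on a complex Hilbert space H and let e ∈ M be a partial isometry. Then the Peirce 2-space M₂(e) = {x ∈ M : ee*xe*e = x}, which is a von Neumann algebra under the product x·y = xe*y and involution x♯ = ex*e with unit e, is again of type I. Explicitly: for every nonzero v ∈ M₂(e) satisfying ve*v = v, ev*e = v, and ve*x = xe*v for all x ∈ M₂(e) (i.e., v is a nonzero central projection of (M₂(e),·,♯)), there exists a nonzero z ∈ M₂(e) with ze*z = z, ez*e = z, ze*v = z, and (ze*xe*z)e*(ze*ye*z) = (ze*ye*z)e*(ze*xe*z) for all x, y ∈ M₂(e) (i.e., z is a nonzero abelian projection of (M₂(e),·,♯) dominated by v). -/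
/-!
The map `x ↦ x e*` identifies `M₂(e)` with the corner `pMp`, `p = ee*`, as a `*`-algebra (the
inverse is `y ↦ y e`).  A projection `v` of `M₂(e)` becomes the projection `w = ve* ≤ p` of `M`,
and an abelian projection `y ≤ w` of `M` becomes the abelian projection `ye ≤ v` of `M₂(e)`.
So it suffices that in a type I algebra every nonzero projection `w` dominates a nonzero abelian
projection.

Let `h` be a nonzero abelian projection under the central support of `w`. Then `a = wxh ≠ 0` for
some `x ∈ M`, and `a*Ma ⊆ hMh` is commutative. In place of the final projection of the polar
decomposition of `a` we use the range projection `z` of `aa*`, which lies under `w` and is the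
strong limit of `aa*(aa* + t)⁻¹` as `t → 0⁺`. Since `a*(aa* + t)⁻¹ = (a*a + t)⁻¹a*` and
`(a*a + t)⁻¹` commutes with `a*Ma`, this gives `a*(mzn - nzm)a = 0` for `m, n ∈ M`, hence
`z(mzn - nzm)z = 0`: the corner `zMz` is commutative.
-/

variable {H : Type*} [NormedAddCommGroup H] [InnerProductSpace ℂ H] [CompleteSpace H]

/-- A *-algebra of operators (given as a set `S`) is of type I if every nonzero
central projection of `S` dominates a nonzero abelian projection of `S`. -/
def TypeISet (S : Set (H →L[ℂ] H)) : Prop :=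
  ∀ v ∈ S, v = star v → v * v = v → (∀ x ∈ S, v * x = x * v) → v ≠ 0 →
    ∃ h ∈ S, h = star h ∧ h * h = h ∧ h ≠ 0 ∧ v * h = h ∧
      ∀ x ∈ S, ∀ y ∈ S, (h * x * h) * (h * y * h) = (h * y * h) * (h * x * h)

/-- The Peirce 2-space of a partial isometry `e` in a von Neumann algebra
`M`: `M₂(e) = {x ∈ M : ee*xe*e = x}`, a von Neumann algebra under the product
`x·y = xe*y` and involution `x♯ = ex*e`, with unit `e`. -/
def PeirceTwo (M : VonNeumannAlgebra H) (e : H →L[ℂ] H) : Set (H →L[ℂ] H) :=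
  {x | x ∈ M ∧ e * star e * x * star e * e = x}

open Filter Topology

lemma Ring.inverse_algebraMap {K A : Type*} [Semifield K] [Semiring A] [Algebra K A] (t : K) :
    Ring.inverse (algebraMap K A t) = algebraMap K A t⁻¹ := by
  rcases eq_or_ne t 0 with rfl | ht
  · simp
  have hu : IsUnit (algebraMap K A t) := (isUnit_iff_ne_zero.mpr ht).map _
  rw [← mul_one (Ring.inverse _), Ring.inverse_mul_eq_iff_eq_mul _ _ _ hu, ← map_mul,
    mul_inv_cancel₀ ht, map_one]

lemma Commute.ringInverse_right {M₀ : Type*} [MonoidWithZero M₀] {S T : M₀} (h : Commute S T) :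
    Commute S (Ring.inverse T) := by
  by_cases hT : IsUnit T
  · lift T to M₀ˣ using hT
    rw [Ring.inverse_unit]
    exact h.units_inv_right
  · rw [Ring.inverse_non_unit T hT]
    exact Commute.zero_right S

lemma Submodule.span_mem_invtSubmodule {R E : Type*} [Semiring R] [AddCommMonoid E] [Module R E]
    {S : Set E} {f : E →ₗ[R] E} (h : Set.MapsTo f S S) :
    Submodule.span R S ∈ Module.End.invtSubmodule f := by
  rw [Module.End.mem_invtSubmodule_iff_map_le, Submodule.map_span]
  exact Submodule.span_mono h.image_subset

section Resolvent

variable {A : Type*}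

lemma commute_ringInverse_add_algebraMap [Ring A] [Algebra ℝ A] (T : A) (t : ℝ) :
    Commute T (Ring.inverse (T + algebraMap ℝ A t)) :=
  ((Commute.refl T).add_right (Algebra.commutes t T).symm).ringInverse_right

lemma mul_ringInverse_mul_add_algebraMap [Ring A] [Algebra ℝ A] {x y : A} {t : ℝ}
    (hxy : IsUnit (x * y + algebraMap ℝ A t)) (hyx : IsUnit (y * x + algebraMap ℝ A t)) :
    y * Ring.inverse (x * y + algebraMap ℝ A t) = Ring.inverse (y * x + algebraMap ℝ A t) * y := by
  have hcomm : (y * x + algebraMap ℝ A t) * y = y * (x * y + algebraMap ℝ A t) := by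
    rw [add_mul, mul_add, mul_assoc, Algebra.commutes]
  rw [eq_comm, Ring.inverse_mul_eq_iff_eq_mul _ _ _ hyx, ← mul_assoc, hcomm, mul_assoc,
    Ring.mul_inverse_cancel _ hxy, mul_one]

variable [CStarAlgebra A] [PartialOrder A] [StarOrderedRing A] {T : A} {t : ℝ}

lemma isStrictlyPositive_add_algebraMap (hT : 0 ≤ T) (ht : 0 < t) :
    IsStrictlyPositive (T + algebraMap ℝ A t) :=
  IsStrictlyPositive.nonneg_add hT (isStrictlyPositive_algebraMap ht)

lemma norm_smul_ringInverse_add_algebraMap_le (hT : 0 ≤ T) (ht : 0 < t) :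
    ‖t • Ring.inverse (T + algebraMap ℝ A t)‖ ≤ 1 := by
  nontriviality A
  have hle : t • Ring.inverse (T + algebraMap ℝ A t) ≤ 1 := by
    have := smul_le_smul_of_nonneg_left (CStarAlgebra.ringInverse_le_ringInverse
      (le_add_of_nonneg_left hT) (isStrictlyPositive_algebraMap ht)) ht.le
    rwa [Ring.inverse_algebraMap, Algebra.algebraMap_eq_smul_one t⁻¹, smul_smul,
      mul_inv_cancel₀ ht.ne', one_smul] at this
  calc ‖t • Ring.inverse (T + algebraMap ℝ A t)‖ ≤ ‖(1 : A)‖ :=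
        CStarAlgebra.norm_le_norm_of_nonneg_of_le (smul_nonneg ht.le
          (isStrictlyPositive_add_algebraMap hT ht).ringInverse.nonneg) hle
    _ = 1 := CStarRing.norm_one

lemma mul_ringInverse_add_algebraMap_eq (hT : 0 ≤ T) (ht : 0 < t) :
    T * Ring.inverse (T + algebraMap ℝ A t) = 1 - t • Ring.inverse (T + algebraMap ℝ A t) := by
  rw [eq_sub_iff_add_eq, ← Ring.mul_inverse_cancel _
    (isStrictlyPositive_add_algebraMap hT ht).isUnit, add_mul, Algebra.smul_def]

lemma norm_mul_ringInverse_add_algebraMap_le (hT : 0 ≤ T) (ht : 0 < t) :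
    ‖T * Ring.inverse (T + algebraMap ℝ A t)‖ ≤ 2 := by
  nontriviality A
  rw [mul_ringInverse_add_algebraMap_eq hT ht]
  calc _ ≤ ‖(1 : A)‖ + ‖t • Ring.inverse (T + algebraMap ℝ A t)‖ := norm_sub_le _ _
    _ ≤ 1 + 1 := add_le_add CStarRing.norm_one.le (norm_smul_ringInverse_add_algebraMap_le hT ht)
    _ = 2 := one_add_one_eq_two

lemma mul_ringInverse_add_algebraMap_mul_self (hT : 0 ≤ T) (ht : 0 < t) :
    T * Ring.inverse (T + algebraMap ℝ A t) * T =
      T - t • (T * Ring.inverse (T + algebraMap ℝ A t)) := by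
  conv_lhs => rw [mul_ringInverse_add_algebraMap_eq hT ht]
  rw [sub_mul, one_mul, smul_mul_assoc, ← (commute_ringInverse_add_algebraMap T t).eq]

lemma tendsto_mul_ringInverse_add_algebraMap_mul_self (hT : 0 ≤ T) :
    Tendsto (fun k : ℕ ↦ T * Ring.inverse (T + algebraMap ℝ A (k + 1 : ℝ)⁻¹) * T) atTop (𝓝 T) := by
  have hsmall : Tendsto (fun k : ℕ ↦
      (k + 1 : ℝ)⁻¹ • (T * Ring.inverse (T + algebraMap ℝ A (k + 1 : ℝ)⁻¹))) atTop (𝓝 0) := by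
    refine squeeze_zero_norm (a := fun k : ℕ ↦ (k + 1 : ℝ)⁻¹ * 2) (fun k ↦ ?_) ?_
    · rw [norm_smul, Real.norm_of_nonneg (by positivity)]
      gcongr
      exact norm_mul_ringInverse_add_algebraMap_le hT (by positivity)
    · simpa using (tendsto_one_div_add_atTop_nhds_zero_nat (𝕜 := ℝ)).mul_const 2
  simp_rw [mul_ringInverse_add_algebraMap_mul_self hT (Nat.inv_pos_of_nat)]
  simpa using (tendsto_const_nhds (x := T)).sub hsmall

end Resolvent

namespace ContinuousLinearMap

noncomputable def rangeProjection (T : H →L[ℂ] H) : H →L[ℂ] H :=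
  T.range.topologicalClosure.starProjection

lemma isStarProjection_rangeProjection (T : H →L[ℂ] H) : IsStarProjection T.rangeProjection :=
  isStarProjection_starProjection

lemma rangeProjection_apply_mem (T : H →L[ℂ] H) (u : H) :
    T.rangeProjection u ∈ T.range.topologicalClosure :=
  Submodule.starProjection_apply_mem _ u

lemma rangeProjection_mul_self (T : H →L[ℂ] H) : T.rangeProjection * T = T := by
  ext u
  exact Submodule.starProjection_eq_self_iff.mpr (Submodule.le_topologicalClosure _ ⟨u, rfl⟩)

lemma mul_rangeProjection_of_isSelfAdjoint {T : H →L[ℂ] H} (hT : IsSelfAdjoint T) :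
    T * T.rangeProjection = T := by
  simpa only [star_mul, hT.star_eq, (T.isStarProjection_rangeProjection).isSelfAdjoint.star_eq]
    using congr(star $(T.rangeProjection_mul_self))

lemma rangeProjection_apply_eq_zero {T : H →L[ℂ] H} (hT : IsSelfAdjoint T) {u : H}
    (hu : T u = 0) : T.rangeProjection u = 0 := by
  rw [rangeProjection, Submodule.starProjection_apply_eq_zero_iff, Submodule.orthogonal_closure,
    IsStarNormal.orthogonal_range hT.isStarNormal]
  exact hu

lemma mul_rangeProjection_eq_zero {T Y : H →L[ℂ] H} (h : Y * T = 0) :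
    Y * T.rangeProjection = 0 := by
  have hle : T.range.topologicalClosure ≤ Y.ker :=
    Submodule.topologicalClosure_minimal _
      (by rintro _ ⟨u, rfl⟩; exact congr($h u)) Y.isClosed_ker
  ext u
  exact hle (T.rangeProjection_apply_mem u)

lemma rangeProjection_mul_eq_zero {T Y : H →L[ℂ] H} (hT : IsSelfAdjoint T) (h : T * Y = 0) :
    T.rangeProjection * Y = 0 := by
  have := mul_rangeProjection_eq_zero (T := T) (Y := star Y)
    (by rw [← hT.star_eq, ← star_mul, h, star_zero])
  rwa [← star_star Y, ← (T.isStarProjection_rangeProjection).isSelfAdjoint.star_eq, ← star_mul,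
    star_eq_zero]

lemma tendsto_mul_ringInverse_add_algebraMap_apply {T : H →L[ℂ] H} (hT : 0 ≤ T) (u : H) :
    Tendsto (fun k : ℕ ↦ (T * Ring.inverse (T + algebraMap ℝ _ (k + 1 : ℝ)⁻¹)) u) atTop
      (𝓝 (T.rangeProjection u)) := by
  set F : ℕ → H →L[ℂ] H := fun k ↦ T * Ring.inverse (T + algebraMap ℝ _ (k + 1 : ℝ)⁻¹)
  have hequi : Equicontinuous fun k ↦ ⇑(F k) := by
    have := (NormedSpace.equicontinuous_TFAE F).out 5 1
    exact this.mp ⟨2, fun k ↦ norm_mul_ringInverse_add_algebraMap_le hT (by positivity)⟩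
  have hclosure : ∀ v ∈ T.range.topologicalClosure,
      Tendsto (F · v) atTop (𝓝 (T.rangeProjection v)) := by
    intro v hv
    refine closure_minimal ?_ (hequi.isClosed_setOfPred_tendsto T.rangeProjection.continuous)
      (by rwa [← T.range.topologicalClosure_coe])
    rintro _ ⟨ζ, rfl⟩
    show Tendsto (fun k ↦ (F k * T) ζ) atTop (𝓝 ((T.rangeProjection * T) ζ))
    rw [rangeProjection_mul_self]
    exact ((apply ℂ H ζ).continuous.tendsto T).comp
      (tendsto_mul_ringInverse_add_algebraMap_mul_self hT)
  have hker : ∀ v, T v = 0 → Tendsto (F · v) atTop (𝓝 (T.rangeProjection v)) := by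
    intro v hv
    simp [F, (commute_ringInverse_add_algebraMap T _).eq, hv,
      rangeProjection_apply_eq_zero hT.isSelfAdjoint hv]
  have hcompl : T (u - T.rangeProjection u) = 0 := by
    rw [map_sub, ← mul_apply_eq_comp, mul_rangeProjection_of_isSelfAdjoint hT.isSelfAdjoint,
      sub_self]
  simpa only [← map_add, add_sub_cancel] using
    (hclosure _ (T.rangeProjection_apply_mem u)).add (hker _ hcompl)

lemma star_mul_mul_rangeProjection_mul_mul_comm {a m n : H →L[ℂ] H}
    (hm : Commute (star a * a) (star a * m * a)) (hn : Commute (star a * a) (star a * n * a))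
    (hmn : Commute (star a * m * a) (star a * n * a)) :
    star a * m * (a * star a).rangeProjection * n * a =
      star a * n * (a * star a).rangeProjection * m * a := by
  set t : ℕ → ℝ := fun k ↦ (k + 1 : ℝ)⁻¹
  have ht : ∀ k, 0 < t k := fun k ↦ by positivity
  set R : ℕ → H →L[ℂ] H := fun k ↦ Ring.inverse (a * star a + algebraMap ℝ _ (t k))
  set R' : ℕ → H →L[ℂ] H := fun k ↦ Ring.inverse (star a * a + algebraMap ℝ _ (t k))
  have hR : ∀ k, star a * R k = R' k * star a := fun k ↦
    mul_ringInverse_mul_add_algebraMap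
      (isStrictlyPositive_add_algebraMap (mul_star_self_nonneg a) (ht k)).isUnit
      (isStrictlyPositive_add_algebraMap (star_mul_self_nonneg a) (ht k)).isUnit
  have hR' : ∀ k, ∀ c, Commute (star a * a) c → Commute c (R' k) := fun k c hc ↦
    (hc.symm.add_right (Algebra.commutes _ c).symm).ringInverse_right
  have happrox : ∀ k, star a * m * (a * star a * R k) * n * a =
      star a * n * (a * star a * R k) * m * a := fun k ↦ by
    have hform : ∀ c d : H →L[ℂ] H, star a * c * (a * star a * R k) * d * a =
        (star a * c * a) * R' k * (star a * d * a) := fun c d ↦ by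
      simp only [mul_assoc, hR k]
    rw [hform, hform, mul_assoc, ((hR' k _ hm).mul_right hmn).eq, (hR' k _ hn).eq]
  ext ξ
  refine tendsto_nhds_unique (f := fun k ↦ (star a * m * (a * star a * R k) * n * a) ξ)
    (l := atTop) ?_ ?_
  · exact ((star a * m).continuous.tendsto _).comp
      (tendsto_mul_ringInverse_add_algebraMap_apply (mul_star_self_nonneg a) ((n * a) ξ))
  · simp only [happrox]
    exact ((star a * n).continuous.tendsto _).comp
      (tendsto_mul_ringInverse_add_algebraMap_apply (mul_star_self_nonneg a) ((m * a) ξ))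

lemma commute_rangeProjection_mul_mul_rangeProjection {a m n : H →L[ℂ] H}
    (hm : Commute (star a * a) (star a * m * a)) (hn : Commute (star a * a) (star a * n * a))
    (hmn : Commute (star a * m * a) (star a * n * a)) :
    Commute ((a * star a).rangeProjection * m * (a * star a).rangeProjection)
      ((a * star a).rangeProjection * n * (a * star a).rangeProjection) := by
  set z := (a * star a).rangeProjection
  have hz : ∀ x, z * (z * x) = z * x := fun x ↦ by
    rw [← mul_assoc, (isStarProjection_rangeProjection _).isIdempotentElem.eq]
  set X := m * z * n - n * z * m
  have hX : star a * X * a = 0 := by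
    simpa only [X, mul_sub, sub_mul, sub_eq_zero, ← mul_assoc]
      using star_mul_mul_rangeProjection_mul_mul_comm hm hn hmn
  have hTXT : a * star a * (X * (a * star a)) = 0 := by
    calc _ = a * (star a * X * a) * star a := by simp only [mul_assoc]
      _ = 0 := by rw [hX, mul_zero, zero_mul]
  have hzXz : z * X * z = 0 := mul_rangeProjection_eq_zero <| by
    rw [mul_assoc]; exact rangeProjection_mul_eq_zero (.mul_star_self a) hTXT
  calc z * m * z * (z * n * z) = z * m * z * n * z := by simp only [mul_assoc, hz]
    _ = z * n * z * m * z := by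
      simpa only [X, mul_sub, sub_mul, sub_eq_zero, mul_assoc] using hzXz
    _ = z * n * z * (z * m * z) := by simp only [mul_assoc, hz]

end ContinuousLinearMap

namespace VonNeumannAlgebra

open ContinuousLinearMap

lemma starProjection_topologicalClosure_mem {M : VonNeumannAlgebra H} {K : Submodule ℂ H}
    (hK : ∀ y ∈ M.commutant, K ∈ Module.End.invtSubmodule y) :
    K.topologicalClosure.starProjection ∈ M := by
  rw [IsStarProjection.mem_iff isStarProjection_starProjection, Submodule.range_starProjection]
  exact fun y hy ↦ Submodule.topologicalClosure_mem_invtSubmodule (hK y hy)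

lemma rangeProjection_mem {M : VonNeumannAlgebra H} {T : H →L[ℂ] H} (hT : T ∈ M) :
    T.rangeProjection ∈ M :=
  starProjection_topologicalClosure_mem fun y hy ↦ by
    rintro _ ⟨ζ, rfl⟩
    exact ⟨y ζ, congr($(mem_commutant_iff.mp hy T hT) ζ)⟩

noncomputable def centralSupport (M : VonNeumannAlgebra H) (w : H →L[ℂ] H) : H →L[ℂ] H :=
  (Submodule.span ℂ {u | ∃ m ∈ M, ∃ ξ, m (w ξ) = u}).topologicalClosure.starProjection

lemma isStarProjection_centralSupport (M : VonNeumannAlgebra H) (w : H →L[ℂ] H) :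
    IsStarProjection (M.centralSupport w) :=
  isStarProjection_starProjection

lemma centralSupport_mem {M : VonNeumannAlgebra H} {w : H →L[ℂ] H} (hw : w ∈ M) :
    M.centralSupport w ∈ M :=
  starProjection_topologicalClosure_mem fun y hy ↦ Submodule.span_mem_invtSubmodule <| by
    rintro _ ⟨m, hm, ξ, rfl⟩
    exact ⟨m, hm, y ξ, congr($(mem_commutant_iff.mp hy _ (mul_mem hm hw)) ξ)⟩

lemma centralSupport_mem_commutant (M : VonNeumannAlgebra H) (w : H →L[ℂ] H) :
    M.centralSupport w ∈ M.commutant :=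
  starProjection_topologicalClosure_mem fun y hy ↦ Submodule.span_mem_invtSubmodule <| by
    rw [commutant_commutant] at hy
    rintro _ ⟨m, hm, ξ, rfl⟩
    exact ⟨y * m, mul_mem hy hm, ξ, rfl⟩

lemma centralSupport_mul_self (M : VonNeumannAlgebra H) (w : H →L[ℂ] H) :
    M.centralSupport w * w = w := by
  ext ξ
  exact Submodule.starProjection_eq_self_iff.mpr
    (Submodule.le_topologicalClosure _ (Submodule.subset_span ⟨1, one_mem M, ξ, rfl⟩))

lemma mul_centralSupport_eq_zero {M : VonNeumannAlgebra H} {w h : H →L[ℂ] H}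
    (hh : ∀ x ∈ M, h * x * w = 0) : h * M.centralSupport w = 0 := by
  have hle : (Submodule.span ℂ {u | ∃ m ∈ M, ∃ ξ, m (w ξ) = u}).topologicalClosure ≤ h.ker := by
    refine Submodule.topologicalClosure_minimal _ (Submodule.span_le.mpr ?_) h.isClosed_ker
    rintro _ ⟨m, hm, ξ, rfl⟩
    exact congr($(hh m hm) ξ)
  ext u
  exact hle (Submodule.starProjection_apply_mem _ u)

lemma exists_ne_zero_star_mul_mul_commute {M : VonNeumannAlgebra H}
    (hM : TypeISet (M : Set (H →L[ℂ] H))) {w : H →L[ℂ] H} (hwM : w ∈ M)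
    (hw : IsStarProjection w) (hw0 : w ≠ 0) :
    ∃ a ∈ M, a ≠ 0 ∧ w * a = a ∧ ∀ m ∈ M, ∀ n ∈ M, Commute (star a * m * a) (star a * n * a) := by
  have hc := isStarProjection_centralSupport M w
  have hc0 : M.centralSupport w ≠ 0 := fun h0 ↦ hw0 <| by
    rw [← centralSupport_mul_self M w, h0, zero_mul]
  obtain ⟨h, hhM, hhs, -, hh0, hch, habel⟩ := hM _ (centralSupport_mem hwM)
    hc.isSelfAdjoint.star_eq.symm hc.isIdempotentElem.eq
    (fun x hx ↦ (mem_commutant_iff.mp (centralSupport_mem_commutant M w) x hx).symm) hc0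
  -- `h` is not orthogonal to `M w M`, as `h` lies under the central support of `w`
  obtain ⟨x, hxM, ha0⟩ : ∃ x ∈ M, w * x * h ≠ 0 := by
    by_contra! hno
    have hhw : ∀ x ∈ M, h * x * w = 0 := fun x hx ↦ by
      simpa [mul_assoc, ← hhs, hw.isSelfAdjoint.star_eq] using
        congr(star $(hno (star x) (star_mem hx)))
    apply hh0
    calc h = star (h * M.centralSupport w) := by
          rw [star_mul, hc.isSelfAdjoint.star_eq, ← hhs, hch]
      _ = 0 := by rw [mul_centralSupport_eq_zero hhw, star_zero]
  refine ⟨w * x * h, mul_mem (mul_mem hwM hxM) hhM, ha0,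
    by rw [← mul_assoc, ← mul_assoc, hw.isIdempotentElem.eq], fun m hm n hn ↦ ?_⟩
  have hconj : ∀ m, star (w * x * h) * m * (w * x * h) = h * (star x * w * m * w * x) * h :=
    fun m ↦ by simp only [star_mul, ← hhs, hw.isSelfAdjoint.star_eq, mul_assoc]
  have hmem : ∀ m ∈ M, star x * w * m * w * x ∈ M := fun m hm ↦
    mul_mem (mul_mem (mul_mem (mul_mem (star_mem hxM) hwM) hm) hwM) hxM
  rw [hconj, hconj]
  exact habel _ (hmem m hm) _ (hmem n hn)

lemma exists_abelian_le_of_star_mul_mul_commute {M : VonNeumannAlgebra H} {w a : H →L[ℂ] H}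
    (haM : a ∈ M) (ha0 : a ≠ 0) (hwa : w * a = a)
    (habel : ∀ m ∈ M, ∀ n ∈ M, Commute (star a * m * a) (star a * n * a)) :
    ∃ z ∈ M, IsStarProjection z ∧ z ≠ 0 ∧ w * z = z ∧
      ∀ m ∈ M, ∀ n ∈ M, Commute (z * m * z) (z * n * z) := by
  have habel_one : ∀ m ∈ M, Commute (star a * a) (star a * m * a) := fun m hm ↦ by
    simpa using habel 1 (one_mem M) m hm
  refine ⟨(a * star a).rangeProjection, rangeProjection_mem (mul_mem haM (star_mem haM)),
    isStarProjection_rangeProjection _, fun h0 ↦ ha0 ?_, ?_, fun m hm n hn ↦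
    commute_rangeProjection_mul_mul_rangeProjection (habel_one m hm) (habel_one n hn)
      (habel m hm n hn)⟩
  · rw [← CStarRing.mul_star_self_eq_zero_iff, ← rangeProjection_mul_self (a * star a), h0,
      zero_mul]
  · have : (w - 1) * (a * star a) = 0 := by rw [sub_mul, one_mul, ← mul_assoc, hwa, sub_self]
    simpa [sub_mul, sub_eq_zero] using mul_rangeProjection_eq_zero this

theorem exists_abelian_le_of_typeI {M : VonNeumannAlgebra H}
    (hM : TypeISet (M : Set (H →L[ℂ] H))) {w : H →L[ℂ] H} (hwM : w ∈ M)
    (hw : IsStarProjection w) (hw0 : w ≠ 0) :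
    ∃ z ∈ M, IsStarProjection z ∧ z ≠ 0 ∧ w * z = z ∧
      ∀ m ∈ M, ∀ n ∈ M, Commute (z * m * z) (z * n * z) := by
  obtain ⟨a, haM, ha0, hwa, habel⟩ := exists_ne_zero_star_mul_mul_commute hM hwM hw hw0
  exact exists_abelian_le_of_star_mul_mul_commute haM ha0 hwa habel

end VonNeumannAlgebra

section PartialIsometry

variable {R : Type*} [Monoid R] [StarMul R] {e x : R}

lemma mul_star_self_mul_of_peirceTwo (he : e * star e * e = e)
    (hx : e * star e * x * star e * e = x) : e * star e * x = x := by
  rw [← hx]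
  simp only [← mul_assoc, he]

lemma mul_star_mul_self_of_peirceTwo (he : e * star e * e = e)
    (hx : e * star e * x * star e * e = x) : x * star e * e = x := by
  rw [← hx]
  simp only [mul_assoc, he]

lemma isStarProjection_mul_star_of_peirceTwo (he : e * star e * e = e)
    (hx : e * star e * x * star e * e = x) (hxx : x * star e * x = x)
    (hxs : e * star x * e = x) : IsStarProjection (x * star e) := by
  refine ⟨by rw [IsIdempotentElem, ← mul_assoc, hxx], ?_⟩
  calc star (x * star e) = e * star (e * star e * x) := by
        rw [star_mul, star_star, mul_star_self_mul_of_peirceTwo he hx]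
    _ = x * star e := by simp only [star_mul, star_star, ← mul_assoc, hxs]

end PartialIsometry

/-- Let `M` be a type I von Neumann algebra and `e ∈ M` a partial
isometry.  Then the Peirce 2-space `M₂(e)`, a von Neumann algebra under
`x·y = xe*y` and `x♯ = ex*e` with unit `e`, is again of type I: every nonzero
central projection `v` of `(M₂(e),·,♯)` dominates a nonzero abelian projection
`z` of `(M₂(e),·,♯)`. -/
theorem stmt_0 (M : VonNeumannAlgebra H)
    (hMtypeI : TypeISet (M : Set (H →L[ℂ] H)))
    (e : H →L[ℂ] H) (heM : e ∈ M) (hpi : e * star e * e = e) :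
    ∀ v ∈ PeirceTwo M e, v * star e * v = v → e * star v * e = v →
      (∀ x ∈ PeirceTwo M e, v * star e * x = x * star e * v) → v ≠ 0 →
      ∃ z ∈ PeirceTwo M e, z * star e * z = z ∧ e * star z * e = z ∧ z ≠ 0 ∧
        z * star e * v = z ∧
        ∀ x ∈ PeirceTwo M e, ∀ y ∈ PeirceTwo M e,
          (z * star e * x * star e * z) * star e * (z * star e * y * star e * z)
            = (z * star e * y * star e * z) * star e * (z * star e * x * star e * z) := by
  intro v ⟨hvM, hv⟩ hvv hvs _ hv0
  have hve : v * star e * e = v := mul_star_mul_self_of_peirceTwo hpi hv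
  have hw := isStarProjection_mul_star_of_peirceTwo hpi hv hvv hvs
  obtain ⟨y, hyM, hy, hy0, hwy, habel⟩ := VonNeumannAlgebra.exists_abelian_le_of_typeI hMtypeI
    (mul_mem hvM (star_mem heM)) hw (fun h0 ↦ hv0 (by rw [← hve, h0, zero_mul]))
  have hpy : e * star e * y = y := by
    rw [← hwy, ← mul_assoc, ← mul_assoc, mul_star_self_mul_of_peirceTwo hpi hv]
  have hyp : y * e * star e = y := by
    simpa only [star_mul, star_star, hy.isSelfAdjoint.star_eq, mul_assoc] using congr(star $hpy)
  have hyw : y * (v * star e) = y := by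
    simpa only [star_mul, hy.isSelfAdjoint.star_eq, hw.isSelfAdjoint.star_eq] using congr(star $hwy)
  refine ⟨y * e, ⟨mul_mem hyM heM, ?_⟩, ?_, ?_, ?_, ?_, ?_⟩
  · rw [← mul_assoc, hpy, hyp]
  · rw [hyp, ← mul_assoc, hy.isIdempotentElem.eq]
  · rw [star_mul, hy.isSelfAdjoint.star_eq, ← mul_assoc, hpy]
  · exact fun h0 ↦ hy0 (by rw [← hyp, h0, zero_mul])
  · rw [hyp, ← hve, ← mul_assoc, hyw]
  · rintro x ⟨hxM, -⟩ x' ⟨hx'M, -⟩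
    have hyp' : ∀ t, y * (e * (star e * t)) = y * t := fun t ↦ by simp only [← mul_assoc, hyp]
    have hpy' : ∀ t, e * (star e * (y * t)) = y * t := fun t ↦ by simp only [← mul_assoc, hpy]
    have hyy : ∀ t, y * (y * t) = y * t := fun t ↦ by rw [← mul_assoc, hy.isIdempotentElem.eq]
    -- both sides reduce to `(y x e* y) (y x' e* y) e`, up to the order of the two factors
    simpa only [mul_assoc, hyp', hpy', hyy] using
      congr($((habel _ (mul_mem hxM (star_mem heM)) _ (mul_mem hx'M (star_mem heM))).eq) * e)
end

section
/- Let M be a C*-algebra, let e ∈ M be a partial isometry (ee*e = e), and let v ∈ M satisfy ee*ve*e = v, ve*v = v, and ev*e = v. Then for all x, y ∈ M with vv*xv*v = x and vv*yv*v = y (i.e., x and y lie in the Peirce 2-space of v), one has xe*y = xv*y and ex*e = vx*v. In other words, on the Peirce 2-space of v the product and involution induced by e coincide with those induced by v. -/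
/-- Let `e` be a partial isometry of a C*-algebra `A` and let `v`
be a self-adjoint idempotent of the Peirce-2 algebra of `e`
(`ee*ve*e = v`, `ve*v = v`, `ev*e = v`).  Then for all `x, y` in the Peirce
2-space of `v` (`vv*xv*v = x`, `vv*yv*v = y`) one has `xe*y = xv*y` and
`ex*e = vx*v`: on the Peirce 2-space of `v`, the product and involution induced
by `e` coincide with those induced by `v`. -/
theorem stmt_2 {A : Type*} [CStarAlgebra A] (e v : A)
    (he : e * star e * e = e)
    (hv2 : e * star e * v * star e * e = v)
    (hvidem : v * star e * v = v)
    (hvsa : e * star v * e = v) :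
    ∀ x y : A, v * star v * x * star v * v = x → v * star v * y * star v * v = y →
      x * star e * y = x * star v * y ∧ e * star x * e = v * star x * v := by
  have hsv2 : star v = star e * e * star v * e * star e := by
    conv_lhs => rw [← hv2]
    simp [star_mul, mul_assoc]
  have hev : e * star v * v = v := by
    calc e * star v * v = (e * star e * e) * star v * (e * (star e * v)) := by
          conv_lhs => rw [hsv2]
          noncomm_ring
      _ = (e * star v * e) * (star e * v) := by rw [he]; noncomm_ring
      _ = v * star e * v := by rw [hvsa]; noncomm_ring
      _ = v := hvidem
  have hve : v * star v * e = v := by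
    calc v * star v * e = v * star e * (e * star v * (e * star e * e)) := by
          conv_lhs => rw [hsv2]
          noncomm_ring
      _ = v * star e * (e * star v * e) := by rw [he]
      _ = v * star e * v := by rw [hvsa]
      _ = v := hvidem
  have hvpi : v * star v * v = v := by
    calc v * star v * v = v * star e * (e * star v * e) * (star e * v) := by
          conv_lhs => rw [hsv2]
          noncomm_ring
      _ = (v * star e * v) * (star e * v) := by rw [hvsa]
      _ = v * (star e * v) := by rw [hvidem]
      _ = v := by rw [← mul_assoc, hvidem]
  intro x y hx hy
  have hx' : star x = star v * v * star x * v * star v := by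
    conv_lhs => rw [← hx]
    simp [star_mul, mul_assoc]
  constructor
  · calc x * star e * y
        = (v * star v * x * star v * v) * star e * (v * star v * y * star v * v) := by
          rw [hx, hy]
      _ = v * star v * x * star v * (v * star e * v) * star v * y * star v * v := by
          noncomm_ring
      _ = v * star v * x * star v * v * star v * y * star v * v := by rw [hvidem]
      _ = v * star v * x * star v * (v * star v * v) * star v * y * star v * v := by
          rw [hvpi]
      _ = (v * star v * x * star v * v) * star v * (v * star v * y * star v * v) := by
          noncomm_ring
      _ = x * star v * y := by rw [hx, hy]
  · calc e * star x * e
        = (e * star v * v) * star x * (v * star v * e) := by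
          conv_lhs => rw [hx']
          noncomm_ring
      _ = v * star x * v := by rw [hev, hve]
end

section
/- Let A be a unital C*-algebra with triple product {x,y,z} = (xy*z + zy*x)/2, and let P : A → A be a contractive linear projection satisfying the conditional expectation formulas P{Px,Py,Pz} = P{Px,y,Pz} = P{x,Py,Pz} for all x,y,z ∈ A, and such that the induced product [x,y,z] := P{x,y,z} satisfies the Jordan triple identity [a,b,[x,y,z]] = [[a,b,x],y,z] − [x,[b,a,y],z] + [x,y,[a,b,z]] for all a,b,x,y,z in the range of P. Suppose u lies in the range of P and satisfies P{u,u,u} = u and P{u,u,x} = x for all x in the range of P (i.e., u is a unitary tripotent of the JB*-triple P(A)). Then P(1) = P(uu*u*u) and P(1) = P((uu* + u*u)/2). Moreover, if u is a projection of A (u = u*, u² = u), then P(1) = u. -/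
/-!
Put `e = P 1`. Since `u` is a unitary tripotent, the Jordan triple identity with `a = e` and
`b = x = y = z = u` gives `[u,[u,e,u],u] = e`, and the conditional expectation formulas evaluate
this as `P(u (u²)* u) = P(u u* u* u)`. Unitarity also gives `e = [e,u,u] = P{1,u,u}`, which is
`P((uu* + u*u)/2)`; for a projection `u` this is `P u = u`.
-/

variable {A : Type*} [CStarAlgebra A]

/-- The Jordan triple product `{x,y,z} = (xy*z + zy*x)/2` of a C*-algebra. -/
noncomputable def tp (x y z : A) : A := (2:ℂ)⁻¹ • (x * star y * z + z * star y * x)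

theorem inv_two_smul_add_self {M : Type*} [AddCommMonoid M] [Module ℂ M] (x : M) : (2:ℂ)⁻¹ • (x + x) = x := by
  rw [← two_smul ℂ x, smul_smul, inv_mul_cancel₀ two_ne_zero, one_smul]

theorem tp_comm (x y z : A) : tp x y z = tp z y x := by
  simp only [tp, add_comm]

theorem tp_one_self_self (y : A) : tp 1 y y = (2:ℂ)⁻¹ • (y * star y + star y * y) := by
  simp only [tp, one_mul, mul_one, add_comm]

theorem tp_one_middle (x : A) : tp x 1 x = x * x := by
  simp only [tp, star_one, mul_one, inv_two_smul_add_self]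

theorem tp_mul_self_middle (x : A) : tp x (x * x) x = x * star x * star x * x := by
  simp only [tp, star_mul, inv_two_smul_add_self, mul_assoc]

section ContractiveProjection

variable {P : A →ₗ[ℂ] A}

theorem P_tp_P_middle (hce1 : ∀ x y z : A, P (tp (P x) (P y) (P z)) = P (tp (P x) y (P z)))
    {x : A} (hx : P x = x) (y : A) : P (tp x (P y) x) = P (tp x y x) := by
  simpa only [hx] using hce1 x y x

theorem P_tp_P_left (hce2 : ∀ x y z : A, P (tp (P x) (P y) (P z)) = P (tp x (P y) (P z)))
    {y : A} (hy : P y = y) (x : A) : P (tp (P x) y y) = P (tp x y y) := by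
  simpa only [hy] using hce2 x y y

/-- For a unitary tripotent `u`, the quadratic operator `Q(u) = [u,·,u]` is an involution. -/
theorem P_tp_P_tp_of_unitary
    (hJordan : ∀ a b x y z : A, P a = a → P b = b → P x = x → P y = y → P z = z →
      P (tp a b (P (tp x y z)))
        = P (tp (P (tp a b x)) y z) - P (tp x (P (tp b a y)) z)
          + P (tp x y (P (tp a b z))))
    {u : A} (hu : P u = u) (hutrip : P (tp u u u) = u)
    (hunitary : ∀ x : A, P x = x → P (tp u u x) = x) {a : A} (ha : P a = a) :
    P (tp u (P (tp u a u)) u) = a := by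
  have hau : P (tp a u u) = a := by rw [tp_comm]; exact hunitary a ha
  have hJ := hJordan a u u u u ha hu hu hu hu
  rw [hutrip, hau, hau, hunitary a ha] at hJ
  rw [sub_add_eq_add_sub, eq_sub_iff_add_eq] at hJ
  exact add_left_cancel hJ

end ContractiveProjection

theorem stmt_9_general (P : A →ₗ[ℂ] A)
    (hproj : ∀ x, P (P x) = P x)
    (hce1 : ∀ x y z : A, P (tp (P x) (P y) (P z)) = P (tp (P x) y (P z)))
    (hce2 : ∀ x y z : A, P (tp (P x) (P y) (P z)) = P (tp x (P y) (P z)))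
    (hJordan : ∀ a b x y z : A, P a = a → P b = b → P x = x → P y = y → P z = z →
      P (tp a b (P (tp x y z)))
        = P (tp (P (tp a b x)) y z) - P (tp x (P (tp b a y)) z)
          + P (tp x y (P (tp a b z))))
    (u : A) (hu : P u = u)
    (hutrip : P (tp u u u) = u)
    (hunitary : ∀ x : A, P x = x → P (tp u u x) = x) :
    P 1 = P (u * star u * star u * u) ∧
    P 1 = P ((2:ℂ)⁻¹ • (u * star u + star u * u)) ∧
    (u = star u → u * u = u → P 1 = u) := by
  have hQ := P_tp_P_tp_of_unitary hJordan hu hutrip hunitary (hproj 1)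
  have hsq : P (tp u (P 1) u) = P (u * u) := by
    rw [P_tp_P_middle hce1 hu, tp_one_middle]
  have hsym : P 1 = P ((2:ℂ)⁻¹ • (u * star u + star u * u)) := by
    rw [← tp_one_self_self, ← P_tp_P_left hce2 hu, tp_comm, hunitary _ (hproj 1)]
  refine ⟨?_, hsym, fun hself hidem => ?_⟩
  · rw [← hQ, hsq, P_tp_P_middle hce1 hu, tp_mul_self_middle]
  · rw [hsym, ← hself, hidem, inv_two_smul_add_self, hu]

/-- Let `P` be a contractive linear projection on a unital
C*-algebra `A` satisfying the conditional expectation formulas, such that the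
induced product `[x,y,z] = P{x,y,z}` satisfies the Jordan triple identity on
the range of `P`.  If `u ∈ P(A)` is a unitary tripotent of the JB*-triple
`P(A)` (i.e. `P{u,u,u} = u` and `P{u,u,x} = x` for every `x ∈ P(A)`), then
`P1 = P(uu*u*u)` and `P1 = P(u∘u*) = P((uu* + u*u)/2)`.  Moreover, if `u` is a
projection of `A`, then `P1 = u`. -/
theorem stmt_9 (P : A →ₗ[ℂ] A)
    (hproj : ∀ x, P (P x) = P x)
    (hcontr : ∀ x, ‖P x‖ ≤ ‖x‖)
    (hce1 : ∀ x y z : A, P (tp (P x) (P y) (P z)) = P (tp (P x) y (P z)))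
    (hce2 : ∀ x y z : A, P (tp (P x) (P y) (P z)) = P (tp x (P y) (P z)))
    (hJordan : ∀ a b x y z : A, P a = a → P b = b → P x = x → P y = y → P z = z →
      P (tp a b (P (tp x y z)))
        = P (tp (P (tp a b x)) y z) - P (tp x (P (tp b a y)) z)
          + P (tp x y (P (tp a b z))))
    (u : A) (hu : P u = u)
    (hutrip : P (tp u u u) = u)
    (hunitary : ∀ x : A, P x = x → P (tp u u x) = x) :
    P 1 = P (u * star u * star u * u) ∧
    P 1 = P ((2:ℂ)⁻¹ • (u * star u + star u * u)) ∧
    (u = star u → u * u = u → P 1 = u) :=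
  stmt_9_general P hproj hce1 hce2 hJordan u hu hutrip hunitary
end

section
/- Let A be a unital C*-algebra and let P : A → A be a contractive linear projection whose range B = P(A) is a *-subalgebra of A (closed under multiplication and adjoint) whose unit is e = P(1), so that e = e*, e² = e, and ex = xe = x for all x ∈ B. Then P is a positive map: for every x ∈ A with x ≥ 0, one has P(x) ≥ 0; in particular P(x∘x*) ≥ 0 for every x ∈ A, where x∘y = (xy + yx)/2. -/
/-!
Let `e = P 1`. If `k` is self-adjoint with `e * k = k` and `b = k⁺ ≠ 0`, then `b * e = b`, so
`b * (t • e + k) * b = b ^ 3 + t • b ^ 2`; by spectral mapping the right side has norm at least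
`‖b‖ ^ 2 * (‖b‖ + t)`, whence `‖b‖ + t ≤ ‖t • e + k‖`.

For self-adjoint `x`, take `k = ℑ (P x)`, which lies in the range because the range is
star-closed. Then `t • e + k = ℑ (P (x + i t))` has norm at most `√(‖x‖ ^ 2 + t ^ 2)`, and
`(‖b‖ + t) ^ 2 ≤ ‖x‖ ^ 2 + t ^ 2` for all `t ≥ 0` forces `b = 0`; applied to `±x` this makes
`P x` self-adjoint. For `x ≥ 0`, take `k = -P x` and `t = ‖x‖`: now `t • e + k = P (‖x‖ - x)`
has norm at most `‖x‖`, so `(P x)⁻ = 0`.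
-/

open ComplexStarModule Complex

lemma imaginaryPart_mem_of_star_mem {A : Type*} [AddCommGroup A] [Module ℂ A] [StarAddMonoid A]
    [StarModule ℂ A] {S : Submodule ℂ A} (hS : ∀ x ∈ S, star x ∈ S) {a : A} (ha : a ∈ S) :
    (ℑ a : A) ∈ S := by
  rw [imaginaryPart_apply_coe]
  exact S.smul_mem _ (S.smul_mem _ (S.sub_mem ha (hS a ha)))

lemma mul_eq_self_of_mul_star_mul_self_eq {A : Type*} [NormedRing A] [StarRing A] [CStarRing A]
    {e m : A} (he : IsSelfAdjoint e) (h : e * (star m * m) = star m * m) : m * e = m := by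
  have hd : IsSelfAdjoint (1 - e) := .sub (.one A) he
  have : star (m * (1 - e)) * (m * (1 - e)) = 0 := by
    rw [star_mul, hd.star_eq, mul_assoc, ← mul_assoc (star m), ← mul_assoc, sub_mul, one_mul,
      h, sub_self, zero_mul]
  rw [CStarRing.star_mul_self_eq_zero_iff, mul_sub, mul_one, sub_eq_zero] at this
  exact this.symm

section CStarAlgebra

variable {A : Type*} [CStarAlgebra A]

lemma posPart_mul_self {k : A} (hk : IsSelfAdjoint k) : k⁺ * k = k⁺ ^ 2 := by
  nth_rw 2 [← CFC.posPart_sub_negPart k hk]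
  rw [mul_sub, CFC.posPart_mul_negPart, sub_zero, sq]

lemma self_mul_posPart {k : A} (hk : IsSelfAdjoint k) : k * k⁺ = k⁺ ^ 2 := by
  nth_rw 1 [← CFC.posPart_sub_negPart k hk]
  rw [sub_mul, CFC.negPart_mul_posPart, sub_zero, sq]

lemma IsSelfAdjoint.sq_norm_add_I_smul_algebraMap_le [Nontrivial A] {x : A}
    (hx : IsSelfAdjoint x) (t : ℝ) : ‖x + I • algebraMap ℝ A t‖ ^ 2 ≤ ‖x‖ ^ 2 + t ^ 2 := by
  set y := algebraMap ℝ A t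
  have hy : IsSelfAdjoint y := .algebraMap A (.all t)
  have hstar : star (x + I • y) * (x + I • y) = x * x + y * y := by
    rw [star_add, hx.star_eq, star_smul, hy.star_eq, Complex.star_def, conj_I, add_mul, mul_add,
      mul_add, smul_mul_assoc, smul_mul_assoc, mul_smul_comm, mul_smul_comm, smul_smul,
      ← Algebra.commutes, neg_mul, I_mul_I, neg_neg, one_smul, neg_smul]
    abel
  calc ‖x + I • y‖ ^ 2 = ‖x * x + y * y‖ := by rw [sq, ← CStarRing.norm_star_mul_self, hstar]
    _ ≤ ‖x * x‖ + ‖y * y‖ := norm_add_le _ _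
    _ = ‖x‖ ^ 2 + t ^ 2 := by
      rw [sq, ← CStarRing.norm_star_mul_self, hx.star_eq, ← map_mul, norm_algebraMap',
        Real.norm_eq_abs, abs_mul_self, sq]

variable [PartialOrder A] [StarOrderedRing A]

lemma posPart_mul_eq_self {e k : A} (he : IsSelfAdjoint e) (hk : IsSelfAdjoint k)
    (hek : e * k = k) : k⁺ * e = k⁺ := by
  refine mul_eq_self_of_mul_star_mul_self_eq he ?_
  rw [(CFC.posPart_nonneg k).isSelfAdjoint.star_eq, ← sq, ← self_mul_posPart hk, ← mul_assoc, hek]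

lemma posPart_mul_smul_add_mul_posPart {e k : A} (he : IsSelfAdjoint e) (hk : IsSelfAdjoint k)
    (hek : e * k = k) (t : ℝ) : k⁺ * (t • e + k) * k⁺ = k⁺ ^ 3 + t • k⁺ ^ 2 := by
  rw [mul_add, add_mul, mul_smul_comm, smul_mul_assoc, posPart_mul_eq_self he hk hek,
    posPart_mul_self hk, ← sq, ← pow_succ, add_comm]

lemma abs_apply_norm_le_norm_cfc [Nontrivial A] (f : ℝ → ℝ) {b : A} (hb : 0 ≤ b)
    (hf : ContinuousOn f (spectrum ℝ b) := by cfc_cont_tac) : |f ‖b‖| ≤ ‖cfc f b‖ := by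
  refine spectrum.norm_le_norm_of_mem (𝕜 := ℝ) ?_
  rw [cfc_map_spectrum f b]
  exact ⟨‖b‖, CStarAlgebra.norm_mem_spectrum_of_nonneg hb, rfl⟩

lemma norm_posPart_add_le {e k : A} (he : IsSelfAdjoint e) (hk : IsSelfAdjoint k)
    (hek : e * k = k) (hk0 : k⁺ ≠ 0) (t : ℝ) : ‖k⁺‖ + t ≤ ‖t • e + k‖ := by
  set b := k⁺
  have hb : 0 ≤ b := CFC.posPart_nonneg k
  have : Nontrivial A := nontrivial_of_ne b 0 hk0
  have hcfc : cfc (fun s : ℝ ↦ s ^ 3 + t * s ^ 2) b = b ^ 3 + t • b ^ 2 := by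
    rw [cfc_add .., cfc_pow_id b 3, cfc_const_mul .., cfc_pow_id b 2]
  have hpos : 0 < ‖b‖ ^ 2 := by positivity
  refine le_of_mul_le_mul_left ?_ hpos
  calc ‖b‖ ^ 2 * (‖b‖ + t) ≤ |‖b‖ ^ 3 + t * ‖b‖ ^ 2| :=
        le_abs_self _ |>.trans_eq' (by ring)
    _ ≤ ‖b * (t • e + k) * b‖ := by
      rw [posPart_mul_smul_add_mul_posPart he hk hek, ← hcfc]
      exact abs_apply_norm_le_norm_cfc (fun s : ℝ ↦ s ^ 3 + t * s ^ 2) hb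
    _ ≤ ‖b‖ ^ 2 * ‖t • e + k‖ := by
      refine norm_mul₃_le.trans_eq ?_
      ring

lemma norm_algebraMap_norm_sub_le {x : A} (hx : 0 ≤ x) : ‖algebraMap ℝ A ‖x‖ - x‖ ≤ ‖x‖ := by
  refine ((CStarAlgebra.mem_Icc_algebraMap_iff_norm_le (norm_nonneg x)).1 ⟨?_, ?_⟩).2
  · exact sub_nonneg.2 hx.isSelfAdjoint.le_algebraMap_norm_self
  · exact sub_le_self _ hx

section ContractiveProjection

variable (P : A →ₗ[ℂ] A) (hcontr : ∀ x, ‖P x‖ ≤ ‖x‖)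
  (hstar : ∀ x ∈ Set.range P, star x ∈ Set.range P) (he : IsSelfAdjoint (P 1))
  (hunit : ∀ x ∈ Set.range P, P 1 * x = x)
include hcontr hstar he hunit

lemma posPart_imaginaryPart_apply_eq_zero {x : A} (hx : IsSelfAdjoint x) :
    (ℑ (P x) : A)⁺ = 0 := by
  set k := (ℑ (P x) : A)
  have hk : k ∈ Set.range P :=
    imaginaryPart_mem_of_star_mem (S := LinearMap.range P) hstar (LinearMap.mem_range_self P x)
  by_contra hk0
  have : Nontrivial A := nontrivial_of_ne _ 0 hk0
  have hbound (t : ℝ) (ht : 0 ≤ t) : (‖k⁺‖ + t) ^ 2 ≤ ‖x‖ ^ 2 + t ^ 2 := by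
    have him : (ℑ (P (x + I • algebraMap ℝ A t)) : A) = t • P 1 + k := by
      rw [map_add, map_smul, Algebra.algebraMap_eq_smul_one, P.map_smul_of_tower, map_add,
        imaginaryPart_I_smul, AddSubgroup.coe_add, ((IsSelfAdjoint.all t).smul he).coe_realPart,
        add_comm]
    calc (‖k⁺‖ + t) ^ 2 ≤ ‖t • P 1 + k‖ ^ 2 := by
          gcongr
          exact norm_posPart_add_le he (ℑ (P x)).2 (hunit k hk) hk0 t
      _ ≤ ‖P (x + I • algebraMap ℝ A t)‖ ^ 2 := by
          gcongr
          rw [← him]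
          exact imaginaryPart.norm_le (P (x + I • algebraMap ℝ A t))
      _ ≤ ‖x‖ ^ 2 + t ^ 2 := (pow_le_pow_left₀ (norm_nonneg _) (hcontr _) 2).trans
          (hx.sq_norm_add_I_smul_algebraMap_le t)
  have hpos : 0 < ‖k⁺‖ := norm_pos_iff.2 hk0
  have := hbound (‖x‖ ^ 2 / ‖k⁺‖) (by positivity)
  have : ‖k⁺‖ * (‖x‖ ^ 2 / ‖k⁺‖) = ‖x‖ ^ 2 := mul_div_cancel₀ _ hpos.ne'
  nlinarith

lemma isSelfAdjoint_apply_of_isSelfAdjoint {x : A} (hx : IsSelfAdjoint x) :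
    IsSelfAdjoint (P x) := by
  have hpos := posPart_imaginaryPart_apply_eq_zero P hcontr hstar he hunit hx
  have hneg : (ℑ (P x) : A)⁻ = 0 := by
    rw [← CFC.posPart_neg, ← AddSubgroup.coe_neg, ← map_neg, ← map_neg]
    exact posPart_imaginaryPart_apply_eq_zero P hcontr hstar he hunit hx.neg
  rw [← imaginaryPart_eq_zero_iff, ← Subtype.coe_inj, ← CFC.posPart_sub_negPart _ (ℑ (P x)).2,
    hpos, hneg, sub_zero, ZeroMemClass.coe_zero]

lemma apply_nonneg_of_nonneg {x : A} (hx : 0 ≤ x) : 0 ≤ P x := by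
  have ha : IsSelfAdjoint (P x) :=
    isSelfAdjoint_apply_of_isSelfAdjoint P hcontr hstar he hunit hx.isSelfAdjoint
  rw [← CFC.negPart_eq_zero_iff _ ha]
  by_contra hb0
  have hle := norm_posPart_add_le he ha.neg (by rw [mul_neg, hunit _ ⟨x, rfl⟩])
    (by rwa [CFC.posPart_neg]) ‖x‖
  have hnorm : ‖‖x‖ • P 1 + -P x‖ ≤ ‖x‖ := by
    rw [← P.map_smul_of_tower, ← map_neg, ← map_add, ← sub_eq_add_neg,
      ← Algebra.algebraMap_eq_smul_one]
    exact (hcontr _).trans (norm_algebraMap_norm_sub_le hx)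
  rw [CFC.posPart_neg] at hle
  exact hb0 (norm_le_zero_iff.1 (by linarith))

end ContractiveProjection

end CStarAlgebra

theorem stmt_10_general {A : Type*} [CStarAlgebra A] [PartialOrder A] [StarOrderedRing A]
    (P : A →ₗ[ℂ] A)
    (hcontr : ∀ x, ‖P x‖ ≤ ‖x‖)
    (hstar : ∀ x ∈ Set.range P, star x ∈ Set.range P)
    (hesa : P 1 = star (P 1))
    (heunit : ∀ x ∈ Set.range P, P 1 * x = x ∧ x * P 1 = x) :
    (∀ x : A, 0 ≤ x → 0 ≤ P x) ∧
    (∀ x : A, 0 ≤ P ((2:ℂ)⁻¹ • (x * star x + star x * x))) := by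
  have hpos (x : A) (hx : 0 ≤ x) : 0 ≤ P x :=
    apply_nonneg_of_nonneg P hcontr hstar hesa.symm (fun y hy ↦ (heunit y hy).1) hx
  refine ⟨hpos, fun x ↦ hpos _ ?_⟩
  open ComplexOrder in
  exact smul_nonneg (by positivity) (add_nonneg (mul_star_self_nonneg x) (star_mul_self_nonneg x))

/-- Let `P` be a contractive linear projection on a unital
C*-algebra `A` whose range `B = P(A)` is a *-subalgebra of `A` with unit
`e = P(1)`.  Then `P` is positive: `x ≥ 0` implies `P(x) ≥ 0`; in particular
`P(x∘x*) ≥ 0` for every `x`, where `x∘y = (xy + yx)/2`. -/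
theorem stmt_10 {A : Type*} [CStarAlgebra A] [PartialOrder A] [StarOrderedRing A]
    (P : A →ₗ[ℂ] A)
    (hproj : ∀ x, P (P x) = P x)
    (hcontr : ∀ x, ‖P x‖ ≤ ‖x‖)
    (hmul : ∀ x ∈ Set.range P, ∀ y ∈ Set.range P, x * y ∈ Set.range P)
    (hstar : ∀ x ∈ Set.range P, star x ∈ Set.range P)
    (hesa : P 1 = star (P 1)) (heidem : P 1 * P 1 = P 1)
    (heunit : ∀ x ∈ Set.range P, P 1 * x = x ∧ x * P 1 = x) :
    (∀ x : A, 0 ≤ x → 0 ≤ P x) ∧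
    (∀ x : A, 0 ≤ P ((2:ℂ)⁻¹ • (x * star x + star x * x))) :=
  stmt_10_general P hcontr hstar hesa heunit
end

section
/- Let A be a unital C*-algebra with triple product {x,y,z} = (xy*z + zy*x)/2 and Jordan product x∘y = (xy + yx)/2, and let P : A → A be a linear projection satisfying the conditional expectation formulas P{Px,Py,Pz} = P{Px,y,Pz} = P{x,Py,Pz} for all x,y,z ∈ A, whose range R = P(A) is closed under the adjoint and under the Jordan product, and such that e := P(1) satisfies e = e* and ex = xe = x for all x ∈ R. Then P(a∘x) = P(a)∘x for all a ∈ A and all x ∈ R. -/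
variable {A : Type*} [CStarAlgebra A]

/-- The Jordan product `x∘y = (xy + yx)/2` of a C*-algebra. -/
noncomputable def jp (x y : A) : A := (2:ℂ)⁻¹ • (x * y + y * x)

theorem tp_eq_jp_of_two_sided_unit {e x : A} (he : star e = e) (hex : e * x = x) (hxe : x * e = x)
    (a : A) : tp a e x = jp a x := by
  rw [tp, jp, he, mul_assoc, hex, hxe]

theorem stmt_11_general (P : A →ₗ[ℂ] A)
    (hproj : ∀ x, P (P x) = P x)
    (hce2 : ∀ x y z : A, P (tp (P x) (P y) (P z)) = P (tp x (P y) (P z)))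
    (hjp : ∀ x ∈ Set.range P, ∀ y ∈ Set.range P, jp x y ∈ Set.range P)
    (hesa : P 1 = star (P 1))
    (heunit : ∀ x ∈ Set.range P, P 1 * x = x ∧ x * P 1 = x) :
    ∀ (a : A), ∀ x ∈ Set.range P, P (jp a x) = jp (P a) x := by
  rintro a _ ⟨w, rfl⟩
  obtain ⟨hex, hxe⟩ := heunit (P w) ⟨w, rfl⟩
  -- `{b, e, x} = b ∘ x` for every `b`, so the expectation formula with `y = 1` reads
  -- `P (P a ∘ x) = P (a ∘ x)`, and `P a ∘ x` already lies in the range.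
  have key := hce2 a 1 w
  simp only [tp_eq_jp_of_two_sided_unit hesa.symm hex hxe] at key
  obtain ⟨u, hu⟩ := hjp (P a) ⟨a, rfl⟩ (P w) ⟨w, rfl⟩
  rw [← key, ← hu, hproj]

/-- Let `P` be a linear projection on a unital C*-algebra `A`
satisfying the conditional expectation formulas, whose range `R = P(A)` is
closed under the adjoint and the Jordan product, and such that `e = P(1)` is
self-adjoint and is a unit for `R`.  Then `P(a∘x) = P(a)∘x` for all `a ∈ A`
and `x ∈ R`. -/
theorem stmt_11 (P : A →ₗ[ℂ] A)
    (hproj : ∀ x, P (P x) = P x)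
    (hce1 : ∀ x y z : A, P (tp (P x) (P y) (P z)) = P (tp (P x) y (P z)))
    (hce2 : ∀ x y z : A, P (tp (P x) (P y) (P z)) = P (tp x (P y) (P z)))
    (hstar : ∀ x ∈ Set.range P, star x ∈ Set.range P)
    (hjp : ∀ x ∈ Set.range P, ∀ y ∈ Set.range P, jp x y ∈ Set.range P)
    (hesa : P 1 = star (P 1))
    (heunit : ∀ x ∈ Set.range P, P 1 * x = x ∧ x * P 1 = x) :
    ∀ (a : A), ∀ x ∈ Set.range P, P (jp a x) = jp (P a) x :=
  stmt_11_general P hproj hce2 hjp hesa heunit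
end

section
/- Let A be a unital C*-algebra with triple product {x,y,z} = (xy*z + zy*x)/2 and Jordan product x∘y = (xy + yx)/2, and let P : A → A be a contractive linear projection satisfying the conditional expectation formulas P{Px,Py,Pz} = P{Px,y,Pz} = P{x,Py,Pz} for all x,y,z ∈ A, whose range is a *-subalgebra of A (closed under multiplication and adjoint) with unit e = P(1). Then for every x ∈ A, 0 ≤ P((P(x) − x)∘(P(x) − x)*) = P(x∘x*) − P(x)∘P(x)*; in particular the Schwarz-type inequality P(x)P(x)* + P(x)*P(x) ≤ P(xx* + x*x) holds for all x ∈ A. -/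
variable {A : Type*} [CStarAlgebra A]

/-!
Specialising the conditional expectation formulas at the unit `e = P 1` of the range gives
`P (e x e) = P x`, `P (x*) = (P x)*` and the module property `P (x ∘ (P y)*) = P x ∘ (P y)*`.
Expanding `(P x - x) ∘ (P x - x)*`, the module property collapses both cross terms to
`P x ∘ (P x)*`, which yields the identity. Positivity of `P` comes from contractivity: for
`w ≥ 0` the element `‖w‖ - w` lies in `[0, ‖w‖]`, so `‖w‖ e - P w` is a self-adjoint element of
norm at most `‖w‖`, and compressing `‖w‖ - (‖w‖ e - P w) ≥ 0` by `e` leaves `P w ≥ 0`.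
-/

lemma half_smul_add_self (u : A) : (2 : ℂ)⁻¹ • (u + u) = u := by
  rw [← two_smul ℂ, smul_smul, inv_mul_cancel₀ two_ne_zero, one_smul]

lemma tp_self_left_right (e y : A) : tp e y e = e * star y * e := by
  rw [tp, half_smul_add_self]

lemma tp_eq_jp_of_unit {e y : A} (hl : e * star y = star y) (hr : star y * e = star y) (x : A) :
    tp x y e = jp x (star y) := by
  rw [tp, jp, mul_assoc, hr, hl]

lemma star_jp_star (u v : A) : star (jp u (star v)) = jp v (star u) := by
  simp only [jp, star_smul, star_add, star_mul, star_star, star_inv₀, star_ofNat]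

lemma mul_star_add_star_mul_eq_jp_add_jp (x : A) :
    x * star x + star x * x = jp x (star x) + jp x (star x) := by
  rw [jp, ← smul_add, half_smul_add_self]

lemma jp_star_self_nonneg [PartialOrder A] [StarOrderedRing A] (v : A) : 0 ≤ jp v (star v) := by
  have h : jp v (star v) = (2 : ℝ)⁻¹ • (v * star v + star v * v) := by
    rw [jp, ← Complex.coe_smul]; norm_num
  rw [h]
  exact smul_nonneg (by norm_num) (add_nonneg (mul_star_self_nonneg v) (star_mul_self_nonneg v))

lemma map_mul_mul_of_map_jp {P : A →ₗ[ℂ] A} {e : A} (he : IsIdempotentElem e)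
    (h : ∀ x, P (jp x e) = P x) (x : A) : P (e * x * e) = P x := by
  have hxee : x * e * e = x * e := by rw [mul_assoc, he.eq]
  have hsplit : jp (jp x e) e = (2 : ℂ)⁻¹ • jp x e + (2 : ℂ)⁻¹ • (e * x * e) := by
    simp only [jp, smul_mul_assoc, mul_smul_comm, add_mul, mul_add, ← mul_assoc, he.eq, hxee]
    module
  have h2 := h (jp x e)
  rw [hsplit, map_add, map_smul, map_smul, h x] at h2
  have h3 : (2 : ℂ)⁻¹ • P (e * x * e) = (2 : ℂ)⁻¹ • P x := by
    rw [eq_sub_of_add_eq' h2]; module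
  exact smul_right_injective A (inv_ne_zero two_ne_zero) h3

lemma IsSelfAdjoint.le_algebraMap_of_norm_le [PartialOrder A] [StarOrderedRing A] {a : A}
    (ha : IsSelfAdjoint a) {t : ℝ} (h : ‖a‖ ≤ t) : a ≤ algebraMap ℝ A t :=
  ha.le_algebraMap_norm_self.trans (by gcongr)

section ConditionalExpectation

variable {P : A →ₗ[ℂ] A}

lemma jp_mem_range {a b : A} (ha : a ∈ Set.range P) (hb : b ∈ Set.range P)
    (hmul : ∀ x ∈ Set.range P, ∀ y ∈ Set.range P, x * y ∈ Set.range P) :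
    jp a b ∈ Set.range P := by
  have hab : a * b ∈ LinearMap.range P := hmul a ha b hb
  have hba : b * a ∈ LinearMap.range P := hmul b hb a ha
  exact Submodule.smul_mem _ _ (add_mem hab hba)

lemma star_map_one (hstar : ∀ x ∈ Set.range P, star x ∈ Set.range P)
    (heunit : ∀ x ∈ Set.range P, P 1 * x = x ∧ x * P 1 = x) : star (P 1) = P 1 := by
  have h : P 1 * star (P 1) = star (P 1) := (heunit _ (hstar _ ⟨1, rfl⟩)).1
  have h' : P 1 * star (P 1) = P 1 := by simpa using congrArg star h
  rw [← h, h']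

lemma isIdempotentElem_map_one (heunit : ∀ x ∈ Set.range P, P 1 * x = x ∧ x * P 1 = x) :
    IsIdempotentElem (P 1) :=
  (heunit _ ⟨1, rfl⟩).1

lemma map_jp_map_one (hproj : ∀ x, P (P x) = P x)
    (hce2 : ∀ x y z : A, P (tp (P x) (P y) (P z)) = P (tp x (P y) (P z)))
    (hstar : ∀ x ∈ Set.range P, star x ∈ Set.range P)
    (heunit : ∀ x ∈ Set.range P, P 1 * x = x ∧ x * P 1 = x) (x : A) :
    P (jp x (P 1)) = P x := by
  have he := isIdempotentElem_map_one heunit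
  have hse := star_map_one hstar heunit
  have htp := tp_eq_jp_of_unit (e := P 1) (y := P 1) (by rw [hse, he.eq]) (by rw [hse, he.eq])
  have hfix : jp (P x) (P 1) = P x := by
    rw [jp, (heunit _ ⟨x, rfl⟩).1, (heunit _ ⟨x, rfl⟩).2, half_smul_add_self]
  have h := hce2 x 1 1
  rwa [htp, htp, hse, hfix, hproj, eq_comm] at h

lemma map_map_one_mul_mul_map_one (hproj : ∀ x, P (P x) = P x)
    (hce2 : ∀ x y z : A, P (tp (P x) (P y) (P z)) = P (tp x (P y) (P z)))
    (hstar : ∀ x ∈ Set.range P, star x ∈ Set.range P)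
    (heunit : ∀ x ∈ Set.range P, P 1 * x = x ∧ x * P 1 = x) (x : A) :
    P (P 1 * x * P 1) = P x :=
  map_mul_mul_of_map_jp (isIdempotentElem_map_one heunit) (map_jp_map_one hproj hce2 hstar heunit) x

lemma map_star_of_condExp (hproj : ∀ x, P (P x) = P x)
    (hce1 : ∀ x y z : A, P (tp (P x) (P y) (P z)) = P (tp (P x) y (P z)))
    (hce2 : ∀ x y z : A, P (tp (P x) (P y) (P z)) = P (tp x (P y) (P z)))
    (hstar : ∀ x ∈ Set.range P, star x ∈ Set.range P)
    (heunit : ∀ x ∈ Set.range P, P 1 * x = x ∧ x * P 1 = x) (x : A) :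
    P (star x) = star (P x) := by
  have hmem : star (P x) ∈ Set.range P := hstar _ ⟨x, rfl⟩
  have hfix : P (star (P x)) = star (P x) := by
    obtain ⟨w, hw⟩ := hmem
    rw [← hw, hproj]
  have h := hce1 1 x 1
  rw [tp_self_left_right, tp_self_left_right, (heunit _ hmem).1, (heunit _ hmem).2, hfix,
    map_map_one_mul_mul_map_one hproj hce2 hstar heunit] at h
  exact h.symm

lemma map_jp_star_map (hproj : ∀ x, P (P x) = P x)
    (hce2 : ∀ x y z : A, P (tp (P x) (P y) (P z)) = P (tp x (P y) (P z)))
    (hmul : ∀ x ∈ Set.range P, ∀ y ∈ Set.range P, x * y ∈ Set.range P)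
    (hstar : ∀ x ∈ Set.range P, star x ∈ Set.range P)
    (heunit : ∀ x ∈ Set.range P, P 1 * x = x ∧ x * P 1 = x) (x y : A) :
    P (jp x (star (P y))) = jp (P x) (star (P y)) := by
  have hsy : star (P y) ∈ Set.range P := hstar _ ⟨y, rfl⟩
  have htp := tp_eq_jp_of_unit (heunit _ hsy).1 (heunit _ hsy).2
  obtain ⟨w, hw⟩ := jp_mem_range ⟨x, rfl⟩ hsy hmul
  have h := hce2 x y 1
  rw [htp, htp, ← hw, hproj, hw] at h
  exact h.symm

lemma map_nonneg_of_contractive [PartialOrder A] [StarOrderedRing A]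
    (hcontr : ∀ x, ‖P x‖ ≤ ‖x‖) (hPstar : ∀ x, P (star x) = star (P x))
    (heunit : ∀ x ∈ Set.range P, P 1 * x = x ∧ x * P 1 = x) {w : A} (hw : 0 ≤ w) :
    0 ≤ P w := by
  set t := ‖w‖
  have hone : algebraMap ℝ A t = t • 1 := Algebra.algebraMap_eq_smul_one t
  have hd : 0 ≤ algebraMap ℝ A t - w :=
    sub_nonneg.2 (IsSelfAdjoint.of_nonneg hw).le_algebraMap_norm_self
  have hnorm_d : ‖algebraMap ℝ A t - w‖ ≤ t :=
    (CStarAlgebra.norm_le_iff_le_algebraMap _ (norm_nonneg w) hd).2 (sub_le_self _ hw)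
  have hPd : P (algebraMap ℝ A t - w) = t • P 1 - P w := by
    rw [map_sub, hone, LinearMap.map_smul_of_tower]
  have hsa : IsSelfAdjoint (P (algebraMap ℝ A t - w)) := by
    rw [IsSelfAdjoint, ← hPstar, (IsSelfAdjoint.of_nonneg hd).star_eq]
  have hle := hsa.le_algebraMap_of_norm_le ((hcontr _).trans hnorm_d)
  have hconj := star_left_conjugate_nonneg (sub_nonneg.2 hle) (P 1)
  have hcorner : star (P 1) * (algebraMap ℝ A t - P (algebraMap ℝ A t - w)) * P 1 = P w := by
    have hPw := heunit _ ⟨w, rfl⟩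
    have he := (isIdempotentElem_map_one heunit).eq
    have hsplit : algebraMap ℝ A t - P (algebraMap ℝ A t - w) = t • (1 - P 1) + P w := by
      rw [hPd, hone]; module
    simp only [← hPstar, star_one, hsplit, mul_add, mul_smul_comm, mul_sub, mul_one, he, sub_self,
      smul_zero, zero_add, hPw.1, hPw.2]
  rwa [hcorner] at hconj

lemma map_jp_sub_map_star (hproj : ∀ x, P (P x) = P x) (hPstar : ∀ x, P (star x) = star (P x))
    (hmodule : ∀ x y, P (jp x (star (P y))) = jp (P x) (star (P y))) (x : A) :
    P (jp (P x - x) (star (P x - x))) = P (jp x (star x)) - jp (P x) (star (P x)) := by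
  have hexpand : jp (P x - x) (star (P x - x))
      = jp (P x) (star (P x)) - star (jp x (star (P x))) - jp x (star (P x)) + jp x (star x) := by
    rw [star_jp_star]
    simp only [jp, star_sub, mul_sub, sub_mul, smul_sub, smul_add]
    abel
  rw [hexpand, map_add, map_sub, map_sub, hPstar, hmodule, hmodule, hproj, star_jp_star]
  abel

end ConditionalExpectation

/-- Let `P` be a contractive linear projection on a unital
C*-algebra `A` satisfying the conditional expectation formulas, whose range is
a *-subalgebra of `A` with unit `e = P(1)`.  Then for every `x ∈ A`,
`0 ≤ P((P(x) − x)∘(P(x) − x)*) = P(x∘x*) − P(x)∘P(x)*`; in particular the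
Schwarz-type inequality `P(x)P(x)* + P(x)*P(x) ≤ P(xx* + x*x)` holds. -/
theorem stmt_13 [PartialOrder A] [StarOrderedRing A] (P : A →ₗ[ℂ] A)
    (hproj : ∀ x, P (P x) = P x)
    (hcontr : ∀ x, ‖P x‖ ≤ ‖x‖)
    (hce1 : ∀ x y z : A, P (tp (P x) (P y) (P z)) = P (tp (P x) y (P z)))
    (hce2 : ∀ x y z : A, P (tp (P x) (P y) (P z)) = P (tp x (P y) (P z)))
    (hmul : ∀ x ∈ Set.range P, ∀ y ∈ Set.range P, x * y ∈ Set.range P)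
    (hstar : ∀ x ∈ Set.range P, star x ∈ Set.range P)
    (heunit : ∀ x ∈ Set.range P, P 1 * x = x ∧ x * P 1 = x) :
    ∀ x : A,
      (0 ≤ P (jp (P x - x) (star (P x - x)))) ∧
      (P (jp (P x - x) (star (P x - x))) = P (jp x (star x)) - jp (P x) (star (P x))) ∧
      (P x * star (P x) + star (P x) * P x ≤ P (x * star x + star x * x)) := by
  intro x
  have hPstar := map_star_of_condExp hproj hce1 hce2 hstar heunit
  have hvar := map_jp_sub_map_star hproj hPstar (map_jp_star_map hproj hce2 hmul hstar heunit) x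
  have hpos : 0 ≤ P (jp (P x - x) (star (P x - x))) :=
    map_nonneg_of_contractive hcontr hPstar heunit (jp_star_self_nonneg _)
  have hle : jp (P x) (star (P x)) ≤ P (jp x (star x)) := sub_nonneg.1 (hvar ▸ hpos)
  refine ⟨hpos, hvar, ?_⟩
  rw [mul_star_add_star_mul_eq_jp_add_jp, mul_star_add_star_mul_eq_jp_add_jp, map_add]
  exact add_le_add hle hle
end

section
/- Let A be a unital C*-algebra, let w₁, …, wₙ ∈ A be pairwise orthogonal partial isometries (wᵢwᵢ*wᵢ = wᵢ; wᵢ*wⱼ = 0 and wᵢwⱼ* = 0 for i ≠ j), and set w = w₁ + ⋯ + wₙ. Let P : A → A be a linear projection (P∘P = P) such that for every index i the following commutation relations hold: P₂(wᵢ)P = P₂(wᵢ)PP₂(wᵢ); PP₂(wᵢ) = PP₂(wᵢ)P; PP₀(wᵢ) = P₀(wᵢ)PP₀(wᵢ) = PP₀(wᵢ)P; PP₁(wᵢ) = PP₁(wᵢ)P; and P₁(wᵢ)PP₀(wᵢ) = 0. Then the same relations hold for w in the Peirce-2 form: P₂(w)P = P₂(w)PP₂(w) and PP₂(w) = PP₂(w)P.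 -/
/-!
Write `eᵢ = wᵢwᵢ*`, `fᵢ = wᵢ*wᵢ`; orthogonality makes these two families of orthogonal
idempotents and `P₂(w)x = ExF` with `E = ∑ eᵢ`, `F = ∑ fᵢ`.

The second relation says that `P₂(w)` maps `ker P` into itself. Each `P₂(wᵢ)` and `P₀(wᵢ)`, hence
each `P₁(wᵢ)`, does so, and `P₁(wᵢ)P₁(wⱼ)x = eᵢxfⱼ + eⱼxfᵢ` for `i ≠ j`, so `2 P₂(w)` is a sum of
such maps.

For the first relation write `x - ExF = (1 - E)x + Ex(1 - F)`. If `z` is annihilated by every `eₖ`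
on the left (or every `fₖ` on the right), then `eᵢ P(z) fⱼ = 0`: for `i = j` by the Peirce-2
relation of `wᵢ`, and for `i ≠ j` after splitting `z` into two pieces lying in the Peirce-0 spaces
of `wᵢ` and `wⱼ`, which `P` preserves.
-/

variable {A : Type*} [CStarAlgebra A]

/-- The Peirce 2-projection of a partial isometry `u`: `P₂(u)x = uu*xu*u`. -/
def P2 (u x : A) : A := u * star u * x * star u * u

/-- The Peirce 0-projection of a partial isometry `u`:
`P₀(u)x = (1 − uu*)x(1 − u*u)`. -/
def P0 (u x : A) : A := (1 - u * star u) * x * (1 - star u * u)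

/-- The Peirce 1-projection of a partial isometry `u`: `P₁(u) = I − P₂(u) − P₀(u)`. -/
def P1 (u x : A) : A := x - P2 u x - P0 u x

section OrthogonalIdempotents

variable {R F ι : Type*} [Ring R] [FunLike F R R] [AddMonoidHomClass F R R] {e f : ι → R} (Q : F)

theorem mul_map_mul_eq_zero_of_forall_mul_left_eq_zero
    (hf : ∀ i, IsIdempotentElem (f i)) (hfo : ∀ i j, i ≠ j → f i * f j = 0)
    (hQ2 : ∀ i z, e i * z * f i = 0 → e i * Q z * f i = 0)
    (hQ0 : ∀ i z, e i * z = 0 → z * f i = 0 → e i * Q z = 0 ∧ Q z * f i = 0)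
    {z : R} (hz : ∀ k, e k * z = 0) (i j : ι) : e i * Q z * f j = 0 := by
  obtain rfl | hij := eq_or_ne i j
  · exact hQ2 i z (by rw [hz, zero_mul])
  have h₁ : e i * Q (z * (1 - f i)) = 0 :=
    (hQ0 i _ (by rw [← mul_assoc, hz, zero_mul])
      (by rw [mul_assoc, (hf i).one_sub_mul_self, mul_zero])).1
  have h₂ : Q (z * f i) * f j = 0 :=
    (hQ0 j _ (by rw [← mul_assoc, hz, zero_mul]) (by rw [mul_assoc, hfo i j hij, mul_zero])).2
  rw [show z = z * (1 - f i) + z * f i by noncomm_ring, map_add, mul_add, add_mul, h₁,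
    zero_mul, mul_assoc, h₂, mul_zero, zero_add]

theorem mul_map_mul_eq_zero_of_forall_mul_right_eq_zero
    (he : ∀ i, IsIdempotentElem (e i)) (heo : ∀ i j, i ≠ j → e i * e j = 0)
    (hQ2 : ∀ i z, e i * z * f i = 0 → e i * Q z * f i = 0)
    (hQ0 : ∀ i z, e i * z = 0 → z * f i = 0 → e i * Q z = 0 ∧ Q z * f i = 0)
    {z : R} (hz : ∀ k, z * f k = 0) (i j : ι) : e i * Q z * f j = 0 := by
  obtain rfl | hij := eq_or_ne i j
  · exact hQ2 i z (by rw [mul_assoc, hz, mul_zero])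
  have h₁ : Q ((1 - e j) * z) * f j = 0 :=
    (hQ0 j _ (by rw [← mul_assoc, (he j).mul_one_sub_self, zero_mul])
      (by rw [mul_assoc, hz, mul_zero])).2
  have h₂ : e i * Q (e j * z) = 0 :=
    (hQ0 i _ (by rw [← mul_assoc, heo i j hij, zero_mul]) (by rw [mul_assoc, hz, mul_zero])).1
  rw [show z = (1 - e j) * z + e j * z by noncomm_ring, map_add, mul_add, add_mul,
    mul_assoc (e i), h₁, mul_zero, h₂, zero_mul, zero_add]

theorem sum_mul_map_mul_sum_eq [Fintype ι]
    (he : ∀ i, IsIdempotentElem (e i)) (heo : ∀ i j, i ≠ j → e i * e j = 0)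
    (hf : ∀ i, IsIdempotentElem (f i)) (hfo : ∀ i j, i ≠ j → f i * f j = 0)
    (hQ2 : ∀ i z, e i * z * f i = 0 → e i * Q z * f i = 0)
    (hQ0 : ∀ i z, e i * z = 0 → z * f i = 0 → e i * Q z = 0 ∧ Q z * f i = 0) (x : R) :
    (∑ i, e i) * Q x * ∑ i, f i = (∑ i, e i) * Q ((∑ i, e i) * x * ∑ i, f i) * ∑ i, f i := by
  have hE : ∀ k, e k * ∑ i, e i = e k := fun k => by
    rw [Finset.mul_sum, Finset.sum_eq_single k (fun i _ hik => heo k i hik.symm)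
      (by simp), (he k).eq]
  have hF : ∀ k, (∑ i, f i) * f k = f k := fun k => by
    rw [Finset.sum_mul, Finset.sum_eq_single k (fun i _ hik => hfo i k hik)
      (by simp), (hf k).eq]
  have vanish : ∀ z, (∀ i j, e i * Q z * f j = 0) → (∑ i, e i) * Q z * ∑ i, f i = 0 :=
    fun z hz => by simp only [Finset.sum_mul, Finset.mul_sum, hz, Finset.sum_const_zero]
  rw [← sub_eq_zero, ← sub_mul, ← mul_sub, ← map_sub,
    show x - (∑ i, e i) * x * ∑ i, f i
      = (1 - ∑ i, e i) * x + (∑ i, e i) * x * (1 - ∑ i, f i) by noncomm_ring,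
    map_add, mul_add, add_mul,
    vanish _ (mul_map_mul_eq_zero_of_forall_mul_left_eq_zero Q hf hfo hQ2 hQ0 fun k => by
      rw [← mul_assoc, mul_sub, mul_one, hE, sub_self, zero_mul]),
    vanish _ (mul_map_mul_eq_zero_of_forall_mul_right_eq_zero Q he heo hQ2 hQ0 fun k => by
      rw [mul_assoc, sub_mul, one_mul, hF, sub_self, mul_zero]), add_zero]

end OrthogonalIdempotents

section StarRing

variable {R : Type*} [Ring R] [StarRing R]

theorem isIdempotentElem_mul_star {u : R} (hu : u * star u * u = u) :
    IsIdempotentElem (u * star u) := by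
  rw [IsIdempotentElem, ← mul_assoc, hu]

theorem isIdempotentElem_star_mul {u : R} (hu : u * star u * u = u) :
    IsIdempotentElem (star u * u) := by
  rw [IsIdempotentElem, mul_assoc, ← mul_assoc u, hu]

theorem mul_star_mul_mul_star_eq_zero {u v : R} (h : star u * v = 0) :
    u * star u * (v * star v) = 0 := by
  rw [mul_assoc, ← mul_assoc (star u), h, zero_mul, mul_zero]

theorem star_mul_mul_star_mul_eq_zero {u v : R} (h : u * star v = 0) :
    star u * u * (star v * v) = 0 := by
  rw [mul_assoc, ← mul_assoc u, h, zero_mul, mul_zero]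

theorem sum_mul_star_sum {ι : Type*} [Fintype ι] {w : ι → R}
    (h : ∀ i j, i ≠ j → w i * star (w j) = 0) :
    (∑ i, w i) * star (∑ i, w i) = ∑ i, w i * star (w i) := by
  rw [star_sum, Finset.sum_mul_sum]
  exact Finset.sum_congr rfl fun i _ =>
    Finset.sum_eq_single i (fun j _ hji => h i j hji.symm) (by simp)

theorem star_sum_mul_sum {ι : Type*} [Fintype ι] {w : ι → R}
    (h : ∀ i j, i ≠ j → star (w i) * w j = 0) :
    star (∑ i, w i) * ∑ i, w i = ∑ i, star (w i) * w i := by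
  rw [star_sum, Finset.sum_mul_sum]
  exact Finset.sum_congr rfl fun i _ =>
    Finset.sum_eq_single i (fun j _ hji => h i j hji.symm) (by simp)

end StarRing

theorem LinearMap.mapsTo_ker_iff {R M : Type*} [Ring R] [AddCommGroup M] [Module R M]
    {P : M →ₗ[R] M} (hP : ∀ x, P (P x) = P x) {T : M → M}
    (hT : ∀ x y, T (x - y) = T x - T y) :
    Set.MapsTo T (ker P) (ker P) ↔ ∀ x, P (T x) = P (T (P x)) := by
  constructor
  · intro h x
    have hx : x - P x ∈ ker P := by rw [mem_ker, map_sub, hP, sub_self]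
    rw [← sub_eq_zero, ← map_sub, ← hT]
    exact h hx
  · intro h y hy
    have hT0 : T 0 = 0 := by simpa using hT 0 0
    rw [SetLike.mem_coe, mem_ker] at hy ⊢
    rw [h, hy, hT0, map_zero]

section Peirce

open LinearMap (ker)

variable {u : A}

theorem P2_eq_mul (u x : A) : P2 u x = u * star u * x * (star u * u) := by
  simp only [P2, mul_assoc]

theorem P2_sub (u x y : A) : P2 u (x - y) = P2 u x - P2 u y := by
  simp only [P2, mul_sub, sub_mul]

theorem P0_sub (u x y : A) : P0 u (x - y) = P0 u x - P0 u y := by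
  rw [P0, P0, P0, mul_sub (1 - u * star u), sub_mul]

theorem P0_eq_self {z : A} (h₁ : u * star u * z = 0) (h₂ : z * (star u * u) = 0) :
    P0 u z = z := by
  rw [P0, sub_mul, one_mul, h₁, sub_zero, mul_sub, mul_one, h₂, sub_zero]

theorem mul_P0_eq_zero (hu : u * star u * u = u) (x : A) : u * star u * P0 u x = 0 := by
  rw [P0, ← mul_assoc, ← mul_assoc, (isIdempotentElem_mul_star hu).mul_one_sub_self,
    zero_mul, zero_mul]

theorem P0_mul_eq_zero (hu : u * star u * u = u) (x : A) : P0 u x * (star u * u) = 0 := by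
  rw [P0, mul_assoc, (isIdempotentElem_star_mul hu).one_sub_mul_self, mul_zero]

theorem P1_P1_of_orthogonal {v : A} (h₁ : star u * v = 0) (h₂ : v * star u = 0) (x : A) :
    P1 u (P1 v x) = u * star u * x * (star v * v) + v * star v * x * (star u * u) := by
  have h₁' : ∀ t, star u * (v * t) = 0 := fun t => by rw [← mul_assoc, h₁, zero_mul]
  have h₂' : ∀ t, v * (star u * t) = 0 := fun t => by rw [← mul_assoc, h₂, zero_mul]
  simp only [P1, P2, P0, mul_sub, sub_mul, mul_one, one_mul, mul_assoc, h₁', h₂', h₂,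
    mul_zero, sub_zero]
  noncomm_ring

theorem P2_sum {ι : Type*} [Fintype ι] {w : ι → A}
    (horth : ∀ i j, i ≠ j → star (w i) * w j = 0 ∧ w i * star (w j) = 0) (x : A) :
    P2 (∑ i, w i) x = (∑ i, w i * star (w i)) * x * ∑ i, star (w i) * w i := by
  rw [P2_eq_mul, sum_mul_star_sum fun i j hij => (horth i j hij).2,
    star_sum_mul_sum fun i j hij => (horth i j hij).1]

theorem mapsTo_ker_P1 {P : A →ₗ[ℂ] A} (h2 : Set.MapsTo (P2 u) (ker P) (ker P))
    (h0 : Set.MapsTo (P0 u) (ker P) (ker P)) : Set.MapsTo (P1 u) (ker P) (ker P) :=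
  fun _ hy => sub_mem (sub_mem hy (h2 hy)) (h0 hy)

theorem mapsTo_ker_P2_sum {ι : Type*} [Fintype ι] {w : ι → A}
    (horth : ∀ i j, i ≠ j → star (w i) * w j = 0 ∧ w i * star (w j) = 0) {P : A →ₗ[ℂ] A}
    (h2 : ∀ i, Set.MapsTo (P2 (w i)) (ker P) (ker P))
    (h0 : ∀ i, Set.MapsTo (P0 (w i)) (ker P) (ker P)) :
    Set.MapsTo (P2 (∑ i, w i)) (ker P) (ker P) := by
  intro y hy
  set a : ι → ι → A := fun i j => w i * star (w i) * y * (star (w j) * w j)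
  have ha : ∀ i j, a i j + a j i ∈ ker P := by
    intro i j
    obtain rfl | hij := eq_or_ne i j
    · simp only [a, ← P2_eq_mul]
      exact add_mem (h2 i hy) (h2 i hy)
    · rw [← P1_P1_of_orthogonal (horth i j hij).1 (horth j i hij.symm).2]
      exact mapsTo_ker_P1 (h2 i) (h0 i) (mapsTo_ker_P1 (h2 j) (h0 j) hy)
  have hsym : (2 : ℂ) • P2 (∑ i, w i) y = ∑ i, ∑ j, (a i j + a j i) := by
    rw [P2_sum horth, Finset.sum_mul, Finset.sum_mul_sum, two_smul]
    simp only [Finset.sum_add_distrib]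
    rw [Finset.sum_comm (f := fun j i => a i j)]
  rw [SetLike.mem_coe, ← Submodule.smul_mem_iff _ (two_ne_zero (α := ℂ)), hsym]
  exact Submodule.sum_mem _ fun i _ => Submodule.sum_mem _ fun j _ => ha i j

theorem mul_map_mul_eq_zero_of_P2 {P : A →ₗ[ℂ] A}
    (h : ∀ x, P2 u (P x) = P2 u (P (P2 u x))) {z : A}
    (hz : u * star u * z * (star u * u) = 0) : u * star u * P z * (star u * u) = 0 := by
  simpa only [P2_eq_mul, hz, map_zero, mul_zero, zero_mul] using h z

theorem mul_map_eq_zero_and_map_mul_eq_zero_of_P0 (hu : u * star u * u = u) {P : A → A}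
    (h : ∀ x, P (P0 u x) = P0 u (P (P0 u x))) {z : A} (h₁ : u * star u * z = 0)
    (h₂ : z * (star u * u) = 0) : u * star u * P z = 0 ∧ P z * (star u * u) = 0 := by
  have hz : P z = P0 u (P z) := by simpa only [P0_eq_self h₁ h₂] using h z
  rw [hz]
  exact ⟨mul_P0_eq_zero hu _, P0_mul_eq_zero hu _⟩

end Peirce

theorem stmt_16_general {n : ℕ} (w : Fin n → A)
    (hpi : ∀ i, w i * star (w i) * w i = w i)
    (horth : ∀ i j, i ≠ j → star (w i) * w j = 0 ∧ w i * star (w j) = 0)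
    (P : A →ₗ[ℂ] A) (hproj : ∀ x, P (P x) = P x)
    (h2P : ∀ i x, P2 (w i) (P x) = P2 (w i) (P (P2 (w i) x)))
    (hP2 : ∀ i x, P (P2 (w i) x) = P (P2 (w i) (P x)))
    (hP0a : ∀ i x, P (P0 (w i) x) = P0 (w i) (P (P0 (w i) x)))
    (hP0b : ∀ i x, P (P0 (w i) x) = P (P0 (w i) (P x))) :
    (∀ x, P2 (∑ i, w i) (P x) = P2 (∑ i, w i) (P (P2 (∑ i, w i) x))) ∧
    (∀ x, P (P2 (∑ i, w i) x) = P (P2 (∑ i, w i) (P x))) := by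
  refine ⟨fun x => ?_, ?_⟩
  · simp only [P2_sum horth]
    exact sum_mul_map_mul_sum_eq P (fun i => isIdempotentElem_mul_star (hpi i))
      (fun i j hij => mul_star_mul_mul_star_eq_zero (horth i j hij).1)
      (fun i => isIdempotentElem_star_mul (hpi i))
      (fun i j hij => star_mul_mul_star_mul_eq_zero (horth i j hij).2)
      (fun i _ => mul_map_mul_eq_zero_of_P2 (h2P i))
      (fun i _ => mul_map_eq_zero_and_map_mul_eq_zero_of_P0 (hpi i) (hP0a i)) x
  · rw [← LinearMap.mapsTo_ker_iff hproj (P2_sub _)]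
    exact mapsTo_ker_P2_sum horth
      (fun i => (LinearMap.mapsTo_ker_iff hproj (P2_sub _)).2 (hP2 i))
      (fun i => (LinearMap.mapsTo_ker_iff hproj (P0_sub _)).2 (hP0b i))

/-- Let `w₁, …, wₙ` be pairwise orthogonal partial isometries in a
unital C*-algebra and `w = w₁ + ⋯ + wₙ`.  If a linear projection `P` satisfies,
for each `i`, the commutation relations
`P₂(wᵢ)P = P₂(wᵢ)PP₂(wᵢ)`, `PP₂(wᵢ) = PP₂(wᵢ)P`,
`PP₀(wᵢ) = P₀(wᵢ)PP₀(wᵢ) = PP₀(wᵢ)P`, `PP₁(wᵢ) = PP₁(wᵢ)P`, and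
`P₁(wᵢ)PP₀(wᵢ) = 0`, then `P₂(w)P = P₂(w)PP₂(w)` and `PP₂(w) = PP₂(w)P`. -/
theorem stmt_16 {n : ℕ} (w : Fin n → A)
    (hpi : ∀ i, w i * star (w i) * w i = w i)
    (horth : ∀ i j, i ≠ j → star (w i) * w j = 0 ∧ w i * star (w j) = 0)
    (P : A →ₗ[ℂ] A) (hproj : ∀ x, P (P x) = P x)
    (h2P : ∀ i x, P2 (w i) (P x) = P2 (w i) (P (P2 (w i) x)))
    (hP2 : ∀ i x, P (P2 (w i) x) = P (P2 (w i) (P x)))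
    (hP0a : ∀ i x, P (P0 (w i) x) = P0 (w i) (P (P0 (w i) x)))
    (hP0b : ∀ i x, P (P0 (w i) x) = P (P0 (w i) (P x)))
    (hP1 : ∀ i x, P (P1 (w i) x) = P (P1 (w i) (P x)))
    (h10 : ∀ i x, P1 (w i) (P (P0 (w i) x)) = 0) :
    (∀ x, P2 (∑ i, w i) (P x) = P2 (∑ i, w i) (P (P2 (∑ i, w i) x))) ∧
    (∀ x, P (P2 (∑ i, w i) x) = P (P2 (∑ i, w i) (P x))) :=
  stmt_16_general w hpi horth P hproj h2P hP2 hP0a hP0b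
end
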